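/- On three qubits, the doubly-controlled-Z gate CCZ (the diagonal matrix with (z,z) entry equal to −1 if z = (1,1,1) and 1 otherwise) is proportional to a product of seven π/8 phase-parity operators: there exists ω : ℂ with |ω| = 1 such that CCZ = ω • (D_{{0},3} · D_{{1},3} · D_{{2},3} · D_{{0,1},3}⁻¹ · D_{{0,2},3}⁻¹ · D_{{1,2},3}⁻¹ · D_{{0,1,2},3}). -/

import Mathlib

set_option maxHeartbeats 1000000

noncomputable section

/-- The parity operator `Z_S`: the diagonal matrix whose `(z,z)` entry is
`(-1) ^ (∑ j ∈ S, z j)`. -/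
def Zgad (n : ℕ) (S : Finset (Fin n)) : Matrix (Fin n → Fin 2) (Fin n → Fin 2) ℂ :=
  Matrix.diagonal fun z => (-1 : ℂ) ^ (∑ j ∈ S, (z j : ℕ))

/-- `D_{S,3} = exp(-(π i/8) • Z_S)` on three qubits. -/
def D3 (S : Finset (Fin 3)) : Matrix (Fin 3 → Fin 2) (Fin 3 → Fin 2) ℂ :=
  NormedSpace.exp ((-(↑Real.pi * Complex.I / 8)) • Zgad 3 S)

/-- The inverse `D_{S,3}⁻¹ = exp(+(π i/8) • Z_S)` on three qubits. -/
def D3inv (S : Finset (Fin 3)) : Matrix (Fin 3 → Fin 2) (Fin 3 → Fin 2) ℂ :=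
  NormedSpace.exp ((↑Real.pi * Complex.I / 8) • Zgad 3 S)

/-- The doubly-controlled-`Z` gate. -/
def CCZ : Matrix (Fin 3 → Fin 2) (Fin 3 → Fin 2) ℂ :=
  Matrix.diagonal fun z => if z 0 = 1 ∧ z 1 = 1 ∧ z 2 = 1 then -1 else 1

lemma exp_smul_Zgad (c : ℂ) (S : Finset (Fin 3)) :
    NormedSpace.exp (c • Zgad 3 S) =
      Matrix.diagonal (fun z => Complex.exp (c * (-1 : ℂ) ^ (∑ j ∈ S, (z j : ℕ)))) := by
  rw [Zgad, ← Matrix.diagonal_smul, Matrix.exp_diagonal, Pi.exp_def]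
  funext z
  simp [Pi.smul_apply, smul_eq_mul, Complex.exp_eq_exp_ℂ]

lemma sum0 (z : Fin 3 → Fin 2) : (∑ j ∈ ({0} : Finset (Fin 3)), (z j : ℕ)) = (z 0 : ℕ) :=
  Finset.sum_singleton _ _

lemma sum1 (z : Fin 3 → Fin 2) : (∑ j ∈ ({1} : Finset (Fin 3)), (z j : ℕ)) = (z 1 : ℕ) :=
  Finset.sum_singleton _ _

lemma sum2 (z : Fin 3 → Fin 2) : (∑ j ∈ ({2} : Finset (Fin 3)), (z j : ℕ)) = (z 2 : ℕ) :=
  Finset.sum_singleton _ _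

lemma sum01 (z : Fin 3 → Fin 2) :
    (∑ j ∈ ({0, 1} : Finset (Fin 3)), (z j : ℕ)) = (z 0 : ℕ) + (z 1 : ℕ) := by
  rw [Finset.sum_insert (by decide), Finset.sum_singleton]

lemma sum02 (z : Fin 3 → Fin 2) :
    (∑ j ∈ ({0, 2} : Finset (Fin 3)), (z j : ℕ)) = (z 0 : ℕ) + (z 2 : ℕ) := by
  rw [Finset.sum_insert (by decide), Finset.sum_singleton]

lemma sum12 (z : Fin 3 → Fin 2) :
    (∑ j ∈ ({1, 2} : Finset (Fin 3)), (z j : ℕ)) = (z 1 : ℕ) + (z 2 : ℕ) := by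
  rw [Finset.sum_insert (by decide), Finset.sum_singleton]

lemma sum012 (z : Fin 3 → Fin 2) :
    (∑ j ∈ ({0, 1, 2} : Finset (Fin 3)), (z j : ℕ)) = (z 0 : ℕ) + ((z 1 : ℕ) + (z 2 : ℕ)) := by
  rw [Finset.sum_insert (by decide), Finset.sum_insert (by decide), Finset.sum_singleton]

theorem stmt9 :
    ∃ ω : ℂ, ‖ω‖ = 1 ∧
      CCZ = ω • (D3 {0} * D3 {1} * D3 {2} *
        D3inv {0, 1} * D3inv {0, 2} * D3inv {1, 2} * D3 {0, 1, 2}) := by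
  refine ⟨Complex.exp (↑Real.pi * Complex.I / 8), ?_, ?_⟩
  · rw [Complex.norm_exp]
    simp
  · rw [D3, D3, D3, D3, D3inv, D3inv, D3inv]
    rw [exp_smul_Zgad, exp_smul_Zgad, exp_smul_Zgad, exp_smul_Zgad, exp_smul_Zgad,
      exp_smul_Zgad, exp_smul_Zgad]
    rw [Matrix.diagonal_mul_diagonal, Matrix.diagonal_mul_diagonal,
      Matrix.diagonal_mul_diagonal, Matrix.diagonal_mul_diagonal,
      Matrix.diagonal_mul_diagonal, Matrix.diagonal_mul_diagonal,
      ← Matrix.diagonal_smul, CCZ]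
    refine congrArg Matrix.diagonal ?_
    funext z
    have key : ∀ a : Fin 2, a = 0 ∨ a = 1 := by decide
    simp only [Pi.mul_apply, Pi.smul_apply, smul_eq_mul, sum0 z, sum1 z, sum2 z,
      sum01 z, sum02 z, sum12 z, sum012 z, ← Complex.exp_add]
    set p : ℂ := ↑Real.pi * Complex.I with hp
    rcases key (z 0) with h0 | h0 <;> rcases key (z 1) with h1 | h1 <;>
        rcases key (z 2) with h2' | h2' <;>
        simp only [h0, h1, h2', Fin.isValue, Fin.val_zero, Fin.val_one] <;>
        norm_num
    rw [show p / 8 + (p / 8 + p / 8 + p / 8 + p / 8 + p / 8 + p / 8 + p / 8) = p from by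
        ring, hp, Complex.exp_pi_mul_I]
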